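/- arXiv:1310.6289 — 5 statements merged into one kernel-verified Lean document; each statement's English description precedes it below -/
import Mathlib

section
/- Suppose a group G acts on a simplicial tree T by graph automorphisms and G fixes an end of T. Then the set N of all elliptic elements of G is a normal subgroup of G, and there exists a group homomorphism φ : G → ℤ with kernel exactly N; in particular the quotient G/N is either trivial or infinite cyclic. -/
/-!
Let `r` be a ray whose end is fixed by `G`: every `g` maps some tail `r (m + ·)` onto a tail
`r (n + ·)`, and since `r` is injective the shift `n - m` depends only on `g`. Composing shifts
shows that `g ↦ n - m` is a homomorphism to `ℤ`. An element with shift `0` fixes the vertices of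
a tail of `r`. Conversely, if `g` fixes a vertex `w`, then `i ↦ d(w, r i)` is eventually periodic
with period `n - m`, which is impossible for `n ≠ m` because it grows without bound along the ray;
if `g` inverts an edge, then `g²` fixes a vertex, so twice the shift of `g` vanishes.
-/

/-- A geodesic ray in a simplicial tree. -/
def GeodesicRay {V : Type*} (T : SimpleGraph V) (r : ℕ → V) : Prop :=
  ∀ m n : ℕ, m ≤ n → T.dist (r m) (r n) = n - m

/-- `G` fixes an end of the tree `T`. -/
def FixesEnd (G : Type*) {V : Type*} [Group G] [MulAction G V] (T : SimpleGraph V) : Prop :=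
  ∃ r : ℕ → V, GeodesicRay T r ∧
    ∀ g : G, ∃ m n : ℕ, ∀ i : ℕ, g • r (m + i) = r (n + i)

namespace SimpleGraph

variable {V W : Type*} {G : SimpleGraph V} {G' : SimpleGraph W} {u v : V}

lemma Reachable.dist_map_le (h : G.Reachable u v) (f : G →g G') :
    G'.dist (f u) (f v) ≤ G.dist u v := by
  obtain ⟨p, hp⟩ := h.exists_walk_length_eq_dist
  calc G'.dist (f u) (f v) ≤ (p.map f).length := dist_le _
    _ = G.dist u v := by rw [Walk.length_map, hp]

lemma Iso.dist_eq (e : G ≃g G') (u v : V) : G'.dist (e u) (e v) = G.dist u v := by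
  by_cases h : G.Reachable u v
  · refine le_antisymm (h.dist_map_le e.toHom) ?_
    simpa using (h.map e.toHom).dist_map_le e.symm.toHom
  · have h' : ¬G'.Reachable (e u) (e v) := fun h' => h (by simpa using h'.map e.symm.toHom)
    rw [dist_eq_zero_of_not_reachable h, dist_eq_zero_of_not_reachable h']

end SimpleGraph

open SimpleGraph

section Ray

variable {V : Type*} {T : SimpleGraph V} {r : ℕ → V}

lemma GeodesicRay.injective (hr : GeodesicRay T r) : Function.Injective r := by
  intro a b hab
  wlog hle : a ≤ b generalizing a b
  · exact (this hab.symm (by omega)).symm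
  have := hr a b hle
  rw [hab, dist_self] at this
  omega

lemma GeodesicRay.eq_of_dist_periodic (hr : GeodesicRay T r) (hconn : T.Connected) (w : V)
    {m n : ℕ} (hper : ∀ i, T.dist w (r (m + i)) = T.dist w (r (n + i))) : m = n := by
  wlog hle : m ≤ n generalizing m n
  · exact (this (fun i => (hper i).symm) (by omega)).symm
  set c := T.dist w (r m)
  have hiter : ∀ k, T.dist w (r (m + k * (n - m))) = c := by
    intro k
    induction k with
    | zero => simp [c]
    | succ k ih =>
      have hstep : n + k * (n - m) = m + (k + 1) * (n - m) := by rw [add_mul, one_mul]; omega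
      rw [← ih, hper (k * (n - m)), hstep]
  by_contra hne
  have hK := hr m (m + (2 * c + 1) * (n - m)) (by omega)
  have htri := hconn.dist_triangle (u := r m) (v := w) (w := r (m + (2 * c + 1) * (n - m)))
  rw [hK, hiter, SimpleGraph.dist_comm] at htri
  have : 2 * c + 1 ≤ (2 * c + 1) * (n - m) := Nat.le_mul_of_pos_right _ (by omega)
  omega

end Ray

section Action

variable {G V : Type*} [Group G] [MulAction G V] {T : SimpleGraph V}

def ShiftsRay (g : G) (r : ℕ → V) (m n : ℕ) : Prop :=
  ∀ i, g • r (m + i) = r (n + i)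

def IsElliptic (T : SimpleGraph V) (g : G) : Prop :=
  (∃ w : V, g • w = w) ∨ ∃ a b : V, T.Adj a b ∧ g • a = b ∧ g • b = a

lemma SimpleGraph.dist_smul_smul
    (haut : ∀ (g : G) (a b : V), T.Adj (g • a) (g • b) ↔ T.Adj a b) (g : G) (a b : V) :
    T.dist (g • a) (g • b) = T.dist a b :=
  Iso.dist_eq ⟨MulAction.toPerm g, haut g _ _⟩ a b

variable {r : ℕ → V} {g h : G} {m n : ℕ}

lemma ShiftsRay.mul {m' n' : ℕ} (hg : ShiftsRay g r m n) (hh : ShiftsRay h r m' n') :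
    ShiftsRay (g * h) r (m + m') (n + n') := by
  intro i
  calc (g * h) • r (m + m' + i) = g • h • r (m' + (m + i)) := by
        rw [mul_smul, ← add_assoc, add_comm m']
    _ = r (n + n' + i) := by rw [hh, ← add_assoc, add_comm n', add_assoc, hg, add_assoc]

lemma ShiftsRay.sub_eq (hr : Function.Injective r) {m' n' : ℕ} (h : ShiftsRay g r m n)
    (h' : ShiftsRay g r m' n') : (n : ℤ) - m = n' - m' := by
  wlog hle : m ≤ m' generalizing m n m' n'
  · exact (this h' h (by omega)).symm
  have e := h (m' - m)
  rw [Nat.add_sub_cancel' hle, ← add_zero m', h' 0] at e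
  have := hr e
  omega

lemma ShiftsRay.eq_of_smul_eq (hr : GeodesicRay T r) (hconn : T.Connected)
    (haut : ∀ (g : G) (a b : V), T.Adj (g • a) (g • b) ↔ T.Adj a b) (h : ShiftsRay g r m n)
    {w : V} (hw : g • w = w) : m = n := by
  refine hr.eq_of_dist_periodic hconn w fun i => ?_
  rw [← dist_smul_smul haut g, hw, h i]

variable (hfix : ∀ g : G, ∃ m n, ShiftsRay g r m n)
include hfix

noncomputable def translationLength (g : G) : ℤ :=
  ((hfix g).choose_spec.choose : ℤ) - (hfix g).choose

lemma translationLength_eq (hr : Function.Injective r) (h : ShiftsRay g r m n) :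
    translationLength hfix g = n - m :=
  (hfix g).choose_spec.choose_spec.sub_eq hr h

lemma translationLength_mul (hr : Function.Injective r) (g h : G) :
    translationLength hfix (g * h) = translationLength hfix g + translationLength hfix h := by
  obtain ⟨m, n, hg⟩ := hfix g
  obtain ⟨m', n', hh⟩ := hfix h
  rw [translationLength_eq hfix hr (hg.mul hh), translationLength_eq hfix hr hg,
    translationLength_eq hfix hr hh]
  push_cast
  ring

noncomputable def translationHom (hr : Function.Injective r) : G →* Multiplicative ℤ :=
  MonoidHom.mk' (fun g => .ofAdd (translationLength hfix g)) fun g h => by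
    simp [translationLength_mul hfix hr]

lemma translationLength_eq_zero_iff (hr : GeodesicRay T r) (hconn : T.Connected)
    (haut : ∀ (g : G) (a b : V), T.Adj (g • a) (g • b) ↔ T.Adj a b) :
    translationLength hfix g = 0 ↔ IsElliptic T g := by
  obtain ⟨m, n, hg⟩ := hfix g
  constructor
  · intro h0
    rw [translationLength_eq hfix hr.injective hg, sub_eq_zero, Nat.cast_inj] at h0
    subst h0
    exact .inl ⟨_, by simpa using hg 0⟩
  · rintro (⟨w, hw⟩ | ⟨a, b, -, hab, hba⟩)
    · rw [translationLength_eq hfix hr.injective hg, hg.eq_of_smul_eq hr hconn haut hw, sub_self]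
    · obtain ⟨m', n', hgg⟩ := hfix (g * g)
      have hsq := translationLength_mul hfix hr.injective g g
      rw [translationLength_eq hfix hr.injective hgg,
        hgg.eq_of_smul_eq hr hconn haut (w := a) (by rw [mul_smul, hab, hba])] at hsq
      omega

end Action

/-- if `G` fixes an end of `T`, the elliptic elements form a normal subgroup
`N` which is the kernel of a homomorphism `G → ℤ`; in particular `G/N` is trivial or
infinite cyclic. -/
theorem stmt_4 {V G : Type*} [Group G] [MulAction G V] (T : SimpleGraph V)
    (hT : T.IsTree)
    (haut : ∀ (g : G) (a b : V), T.Adj (g • a) (g • b) ↔ T.Adj a b)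
    (hend : FixesEnd G T) :
    ∃ N : Subgroup G, N.Normal ∧
      (N : Set G) =
        {g : G | (∃ w : V, g • w = w) ∨ ∃ a b : V, T.Adj a b ∧ g • a = b ∧ g • b = a} ∧
      ∃ φ : G →* Multiplicative ℤ, φ.ker = N := by
  obtain ⟨r, hr, hfix⟩ := hend
  let φ := translationHom hfix hr.injective
  refine ⟨φ.ker, φ.normal_ker, ?_, φ, rfl⟩
  ext g
  exact ofAdd_eq_one.trans (translationLength_eq_zero_iff hfix hr hT.connected haut)
end

section
/- Let k be a field and let Aut k[x,y] denote the group of k-algebra automorphisms of the polynomial ring k[x,y] in two variables. Let C ≤ Aut k[x,y] be the subgroup of all automorphisms γ for which there exist a, d ∈ k∖{0} and b, c, e ∈ k with γ(x) = a·x + b and γ(y) = c·x + d·y + e. Then there exists α ∈ Aut k[x,y] such that α⁻¹Cα ∩ C = {1}; that is, for every γ ∈ C, if α⁻¹γα ∈ C then γ is the identity automorphism. -/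
open MvPolynomial

/-- The subgroup `C` of `Aut k[x,y]`: triangular-affine automorphisms
`x ↦ a·x + b`, `y ↦ c·x + d·y + e` with `a, d ≠ 0`. -/
def IsTriangularAffine (k : Type*) [Field k]
    (γ : MvPolynomial (Fin 2) k ≃ₐ[k] MvPolynomial (Fin 2) k) : Prop :=
  ∃ a b c d e : k, a ≠ 0 ∧ d ≠ 0 ∧
    γ (X 0) = C a * X 0 + C b ∧
    γ (X 1) = C c * X 0 + C d * X 1 + C e

/-!
Take `α = shear₁ f * shear₀ f` with `f = t² + t⁴ + t⁷`, i.e. `α x = x + f(y + f(x))` and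
`α y = y + f(x)`. If `γ` and `β = α⁻¹γα` are triangular affine, then `γα = αβ`. Comparing the
images of `y` on the lines `x = 0` and `y = 0` gives one-variable identities
`f(at + b) + ct + e = d' f(t) + e'`, which force `γ x = x`, `γ y = y + e` because `f` admits no
nontrivial affine substitution of this kind. Comparing the images of `x` on the line `x = 0` then
gives `f(t + e) = a' f(t) + b'`, so `e = 0`.
-/

namespace Polynomial

lemma coeff_C_mul_X_add_C_pow {R : Type*} [CommSemiring R] (a b : R) (n m : ℕ) :
    ((C a * X + C b) ^ n).coeff m = a ^ m * b ^ (n - m) * n.choose m := by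
  rw [show C a * X + C b = (X + C b).comp (C a * X) by simp, ← pow_comp, comp_C_mul_X_coeff,
    coeff_X_add_C_pow]
  ring

variable {R : Type*}

noncomputable def shearPoly [Semiring R] : R[X] := X ^ 2 + X ^ 4 + X ^ 7

@[simp]
lemma shearPoly_eval_zero [Semiring R] : (shearPoly : R[X]).eval 0 = 0 := by
  simp [shearPoly, eval_X_pow]

lemma coeff_shearPoly_comp [CommSemiring R] (a b : R) (m : ℕ) :
    (shearPoly.comp (C a * X + C b)).coeff m = a ^ m *
      (b ^ (2 - m) * (2 : ℕ).choose m + b ^ (4 - m) * (4 : ℕ).choose m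
        + b ^ (7 - m) * (7 : ℕ).choose m) := by
  simp only [shearPoly, add_comp, X_pow_comp, coeff_add, coeff_C_mul_X_add_C_pow]
  ring

lemma C_mul_shearPoly_add_affine_eq_affine [Semiring R] {c d e d' e' : R}
    (h : C c * shearPoly + C d * X + C e = C d' * X + C e') : c = 0 ∧ d = d' := by
  have hcoeff (m : ℕ) := congrArg (coeff · m) h
  simp only [shearPoly, coeff_add, coeff_C_mul, coeff_X_pow, coeff_X, coeff_C] at hcoeff
  exact ⟨by simpa using hcoeff 7, by simpa using hcoeff 1⟩

lemma shearPoly_comp_affine_eq [CommRing R] [IsDomain R] {a b c d e : R} (ha : a ≠ 0)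
    (h : shearPoly.comp (C a * X + C b) + C c * X = C d * shearPoly + C e) :
    a = 1 ∧ b = 0 ∧ c = 0 ∧ d = 1 := by
  have hcoeff (m : ℕ) := congrArg (coeff · m) h
  simp only [coeff_add, coeff_shearPoly_comp, coeff_C_mul, coeff_C] at hcoeff
  simp only [shearPoly, coeff_add, coeff_X_pow, coeff_X] at hcoeff
  have h7 := hcoeff 7
  have h6 := hcoeff 6
  have h4 := hcoeff 4
  have h3 := hcoeff 3
  have h2 := hcoeff 2
  have h1 := hcoeff 1
  norm_num [Nat.choose] at h7 h6 h4 h3 h2 h1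
  have h7b : 7 * b = 0 := by simpa [ha, mul_comm] using h6
  have h4b : 4 * b + 35 * b ^ 4 = 0 := by simpa [ha, mul_comm] using h3
  -- `7` and `4` are coprime, so this works in every characteristic.
  have hb : b = 0 := by linear_combination 2 * h4b - (1 + 10 * b ^ 3) * h7b
  subst hb
  norm_num at h7 h4 h2 h1
  have ha2 : a ^ 2 = 1 := mul_left_cancel₀ (pow_ne_zero 2 ha) (by linear_combination h4 - h2)
  have ha3 : a ^ 3 = 1 := mul_left_cancel₀ (pow_ne_zero 4 ha) (by linear_combination h7 - h4)
  have ha1 : a = 1 := by linear_combination ha3 - a * ha2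
  subst ha1
  exact ⟨rfl, rfl, h1, by simpa using h7.symm⟩

end Polynomial

namespace MvPolynomial

variable {σ R S : Type*} [CommSemiring R] [CommSemiring S] [Algebra R S]

lemma aeval_apply_algHom {F : Type*} [FunLike F (MvPolynomial σ R) (MvPolynomial σ R)]
    [AlgHomClass F R (MvPolynomial σ R) (MvPolynomial σ R)] (g : σ → S) (γ : F)
    (p : MvPolynomial σ R) : aeval g (γ p) = aeval (fun i ↦ aeval g (γ (X i))) p := by
  have hγ := AlgHom.congr_fun (aeval_unique (AlgHomClass.toAlgHom γ)) p
  rw [AlgHom.coe_coe] at hγ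
  rw [hγ, comp_aeval_apply]
  rfl

lemma aeval_conj_apply_X (g : σ → S) (γ α : MvPolynomial σ R ≃ₐ[R] MvPolynomial σ R) (i : σ) :
    aeval (fun j ↦ aeval g (γ (X j))) (α (X i))
      = aeval (fun j ↦ aeval g (α (X j))) ((α⁻¹ * γ * α) (X i)) := by
  rw [← aeval_apply_algHom, ← aeval_apply_algHom]
  simp

end MvPolynomial

section Shear

variable {R : Type*} [CommRing R]

noncomputable def shear₀ (p : Polynomial R) :
    MvPolynomial (Fin 2) R ≃ₐ[R] MvPolynomial (Fin 2) R :=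
  AlgEquiv.ofAlgHom (aeval ![X 0 + Polynomial.aeval (X 1) p, X 1])
    (aeval ![X 0 - Polynomial.aeval (X 1) p, X 1])
    (by ext i; fin_cases i <;> simp [← Polynomial.aeval_algHom_apply])
    (by ext i; fin_cases i <;> simp [← Polynomial.aeval_algHom_apply])

noncomputable def shear₁ (p : Polynomial R) :
    MvPolynomial (Fin 2) R ≃ₐ[R] MvPolynomial (Fin 2) R :=
  AlgEquiv.ofAlgHom (aeval ![X 0, X 1 + Polynomial.aeval (X 0) p])
    (aeval ![X 0, X 1 - Polynomial.aeval (X 0) p])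
    (by ext i; fin_cases i <;> simp [← Polynomial.aeval_algHom_apply])
    (by ext i; fin_cases i <;> simp [← Polynomial.aeval_algHom_apply])

@[simp]
lemma shear₀_X_zero (p : Polynomial R) : shear₀ p (X 0) = X 0 + Polynomial.aeval (X 1) p := by
  simp [shear₀]

@[simp]
lemma shear₀_X_one (p : Polynomial R) : shear₀ p (X 1) = X 1 := by
  simp [shear₀]

@[simp]
lemma shear₁_X_zero (p : Polynomial R) : shear₁ p (X 0) = X 0 := by
  simp [shear₁]

@[simp]
lemma shear₁_X_one (p : Polynomial R) : shear₁ p (X 1) = X 1 + Polynomial.aeval (X 0) p := by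
  simp [shear₁]

variable (R) in
noncomputable abbrev shearAut : MvPolynomial (Fin 2) R ≃ₐ[R] MvPolynomial (Fin 2) R :=
  shear₁ Polynomial.shearPoly * shear₀ Polynomial.shearPoly

end Shear

section Conjugation

variable {k : Type*} [Field k]

lemma exists_eq_translate_of_isTriangularAffine_conj
    {γ : MvPolynomial (Fin 2) k ≃ₐ[k] MvPolynomial (Fin 2) k} (hγ : IsTriangularAffine k γ)
    (hβ : IsTriangularAffine k ((shearAut k)⁻¹ * γ * shearAut k)) :
    ∃ e : k, γ (X 0) = X 0 ∧ γ (X 1) = X 1 + C e := by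
  obtain ⟨a, b, c, d, e, ha, -, hx, hy⟩ := hγ
  obtain ⟨-, -, c', d', e', -, -, -, hy'⟩ := hβ
  have hline₀ : Polynomial.C c' * Polynomial.shearPoly + Polynomial.C d' * Polynomial.X
      + Polynomial.C e'
      = Polynomial.C d * Polynomial.X + Polynomial.C (e + Polynomial.shearPoly.eval b) := by
    have h := aeval_conj_apply_X ![0, (Polynomial.X : Polynomial k)] γ (shearAut k) 1
    rw [hy'] at h
    simpa [hx, hy, ← Polynomial.aeval_algHom_apply, ← Polynomial.comp_eq_aeval,
      Polynomial.comp_C, add_assoc] using h.symm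
  obtain ⟨rfl, rfl⟩ := Polynomial.C_mul_shearPoly_add_affine_eq_affine hline₀
  have hline₁ : Polynomial.C c * Polynomial.X + Polynomial.C e
      + Polynomial.shearPoly.comp (Polynomial.C a * Polynomial.X + Polynomial.C b)
      = Polynomial.C d' * Polynomial.shearPoly + Polynomial.C e' := by
    have h := aeval_conj_apply_X ![(Polynomial.X : Polynomial k), 0] γ (shearAut k) 1
    rw [hy'] at h
    simpa [hx, hy, ← Polynomial.aeval_algHom_apply, ← Polynomial.comp_eq_aeval] using h
  obtain ⟨rfl, rfl, rfl, rfl⟩ := Polynomial.shearPoly_comp_affine_eq (b := b) (c := c)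
    (d := d') (e := e' - e) ha (by rw [map_sub]; linear_combination hline₁)
  exact ⟨e, by simpa using hx, by simpa using hy⟩

lemma eq_one_of_isTriangularAffine_conj
    {γ : MvPolynomial (Fin 2) k ≃ₐ[k] MvPolynomial (Fin 2) k} (hγ : IsTriangularAffine k γ)
    (hβ : IsTriangularAffine k ((shearAut k)⁻¹ * γ * shearAut k)) : γ = 1 := by
  obtain ⟨e, hx, hy⟩ := exists_eq_translate_of_isTriangularAffine_conj hγ hβ
  obtain ⟨a', b', -, -, -, ha', -, hx', -⟩ := hβ
  have hline : Polynomial.shearPoly.comp (Polynomial.X + Polynomial.C e)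
      = Polynomial.C a' * Polynomial.shearPoly + Polynomial.C b' := by
    have h := aeval_conj_apply_X ![0, (Polynomial.X : Polynomial k)] γ (shearAut k) 0
    rw [hx'] at h
    simpa [hx, hy, ← Polynomial.aeval_algHom_apply, ← Polynomial.comp_eq_aeval] using h
  obtain ⟨-, rfl, -, -⟩ := Polynomial.shearPoly_comp_affine_eq (a := 1) (b := e) (c := 0)
    one_ne_zero (by simpa using hline)
  apply AlgEquiv.coe_toAlgHom_injective
  ext i
  fin_cases i <;> simp [hx, hy]

end Conjugation

/-- there exists `α ∈ Aut k[x,y]` with `α⁻¹Cα ∩ C = {1}`. -/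
theorem stmt_6 (k : Type*) [Field k] :
    ∃ α : MvPolynomial (Fin 2) k ≃ₐ[k] MvPolynomial (Fin 2) k,
      ∀ γ : MvPolynomial (Fin 2) k ≃ₐ[k] MvPolynomial (Fin 2) k,
        IsTriangularAffine k γ → IsTriangularAffine k (α⁻¹ * γ * α) → γ = 1 :=
  ⟨shearAut k, fun _ ↦ eq_one_of_isTriangularAffine_conj⟩
end

section
/- Let G be a group, B ≤ G a subgroup, and φ : G ≃ B an isomorphism of G onto B, and let H be the corresponding ascending HNN extension of G, with canonical embedding of : G → H and stable letter t satisfying t·of(g)·t⁻¹ = of(φ(g)) for all g ∈ G. Let N = ⋃_{n∈ℕ} t⁻ⁿ·of(G)·tⁿ. Then N is a normal subgroup of H, and the canonical homomorphism H → ℤ determined by t ↦ 1 and of(g) ↦ 0 for all g ∈ G has kernel exactly N; in particular H/N is infinite cyclic. -/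
/-!
Let `χ : H → ℤ` be the homomorphism counting the exponent of the stable letter. Since `A = G`, the
relation `t · of g = of (φ g) · t` lets one move every `t` to the right past any element of `G`
(and every `t⁻¹` to the left), so every element of `H` has the form `t⁻ⁿ · of g · tᵐ`. Such an
element has `χ`-value `m - n`, so the kernel of `χ`, which is normal, is exactly
`⋃ₙ t⁻ⁿ · of(G) · tⁿ`.
-/

namespace HNNExtension

variable {G : Type*} [Group G]

section Degree

variable {A B : Subgroup G} {φ : A ≃* B}

def tDegree : HNNExtension G A B φ →* Multiplicative ℤ :=
  lift 1 (Multiplicative.ofAdd 1) fun _ => by simp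

@[simp]
theorem tDegree_t : tDegree (t : HNNExtension G A B φ) = Multiplicative.ofAdd 1 :=
  lift_t _ _ _

@[simp]
theorem tDegree_of (g : G) : tDegree (of g : HNNExtension G A B φ) = 1 :=
  lift_of _ _ _ g

theorem tDegree_inv_t_pow_mul_of_mul_t_pow (n m : ℕ) (g : G) :
    tDegree (t⁻¹ ^ n * of g * t ^ m : HNNExtension G A B φ) =
      Multiplicative.ofAdd ((m : ℤ) - n) := by
  simp [← ofAdd_nsmul, ← ofAdd_neg, ← ofAdd_add, sub_eq_neg_add]

end Degree

section Ascending

variable {B : Subgroup G} {φ : (⊤ : Subgroup G) ≃* B}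

theorem exists_t_pow_mul_of_eq (k : ℕ) (g : G) :
    ∃ g' : G, t ^ k * of g = (of g' * t ^ k : HNNExtension G ⊤ B φ) := by
  induction k generalizing g with
  | zero => exact ⟨g, by simp⟩
  | succ k ih =>
    obtain ⟨g', hg'⟩ := ih (φ ⟨g, Subgroup.mem_top g⟩)
    refine ⟨g', ?_⟩
    rw [pow_succ, mul_assoc, t_mul_of (a := ⟨g, Subgroup.mem_top g⟩), ← mul_assoc, hg', mul_assoc]

theorem exists_of_mul_inv_t_pow_eq (k : ℕ) (g : G) :
    ∃ g' : G, of g * t⁻¹ ^ k = (t⁻¹ ^ k * of g' : HNNExtension G ⊤ B φ) := by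
  obtain ⟨g', hg'⟩ := exists_t_pow_mul_of_eq (φ := φ) k g
  have hconj : of g' = (t ^ k * of g * t⁻¹ ^ k : HNNExtension G ⊤ B φ) := by
    rw [hg']; group
  exact ⟨g', by rw [hconj]; group⟩

theorem exists_eq_inv_t_pow_mul_of_mul_t_pow (h : HNNExtension G ⊤ B φ) :
    ∃ n m : ℕ, ∃ g : G, t⁻¹ ^ n * of g * t ^ m = h := by
  induction h using induction_on with
  | of g => exact ⟨0, 0, g, by simp⟩
  | t => exact ⟨0, 1, 1, by simp⟩
  | inv x hx =>
    obtain ⟨n, m, g, rfl⟩ := hx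
    exact ⟨m, n, g⁻¹, by rw [map_inv]; group⟩
  | mul x y hx hy =>
    obtain ⟨n, m, g, rfl⟩ := hx
    obtain ⟨n', m', g', rfl⟩ := hy
    rcases le_total m n' with hle | hle
    · obtain ⟨k, rfl⟩ := Nat.exists_eq_add_of_le hle
      obtain ⟨g'', hg''⟩ := exists_of_mul_inv_t_pow_eq (φ := φ) k g
      refine ⟨n + k, m', g'' * g', ?_⟩
      calc t⁻¹ ^ (n + k) * of (g'' * g') * t ^ m'
          = t⁻¹ ^ n * (t⁻¹ ^ k * of g'') * of g' * t ^ m' := by rw [map_mul]; group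
        _ = t⁻¹ ^ n * of g * t ^ m * (t⁻¹ ^ (m + k) * of g' * t ^ m') := by rw [← hg'']; group
    · obtain ⟨k, rfl⟩ := Nat.exists_eq_add_of_le hle
      obtain ⟨g'', hg''⟩ := exists_t_pow_mul_of_eq (φ := φ) k g'
      refine ⟨n, k + m', g * g'', ?_⟩
      calc t⁻¹ ^ n * of (g * g'') * t ^ (k + m')
          = t⁻¹ ^ n * of g * (of g'' * t ^ k) * t ^ m' := by rw [map_mul]; group
        _ = t⁻¹ ^ n * of g * t ^ (n' + k) * (t⁻¹ ^ n' * of g' * t ^ m') := by rw [← hg'']; group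

theorem mem_ker_tDegree_iff {h : HNNExtension G ⊤ B φ} :
    h ∈ tDegree.ker ↔ ∃ n : ℕ, ∃ g : G, t⁻¹ ^ n * of g * t ^ n = h := by
  constructor
  · intro hker
    obtain ⟨n, m, g, rfl⟩ := exists_eq_inv_t_pow_mul_of_mul_t_pow h
    rw [MonoidHom.mem_ker, tDegree_inv_t_pow_mul_of_mul_t_pow, ofAdd_eq_one, sub_eq_zero,
      Nat.cast_inj] at hker
    exact ⟨n, g, by rw [hker]⟩
  · rintro ⟨n, g, rfl⟩
    simp

end Ascending

end HNNExtension

open HNNExtension in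
/-- in the ascending HNN extension `H` of `G` along `φ : G ≃ B`, the set
`N = ⋃ₙ t⁻ⁿ·of(G)·tⁿ` is a normal subgroup and is the kernel of the canonical
homomorphism `H → ℤ` sending `t ↦ 1` and `of(g) ↦ 0`; in particular `H/N ≅ ℤ`. -/
theorem stmt_8 {G : Type*} [Group G] (B : Subgroup G) (φ : G ≃* B) :
    ∃ N : Subgroup (HNNExtension G ⊤ B (Subgroup.topEquiv.trans φ)),
      N.Normal ∧
      (N : Set (HNNExtension G ⊤ B (Subgroup.topEquiv.trans φ))) =
        ⋃ n : ℕ, (fun g : G =>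
          (HNNExtension.t)⁻¹ ^ n * HNNExtension.of g * HNNExtension.t ^ n) '' Set.univ ∧
      ∃ ψ : HNNExtension G ⊤ B (Subgroup.topEquiv.trans φ) →* Multiplicative ℤ,
        ψ HNNExtension.t = Multiplicative.ofAdd 1 ∧
        (∀ g : G, ψ (HNNExtension.of g) = 1) ∧
        ψ.ker = N := by
  refine ⟨tDegree.ker, tDegree.normal_ker, ?_, tDegree, tDegree_t, tDegree_of, rfl⟩
  ext h
  simp only [SetLike.mem_coe, mem_ker_tDegree_iff, Set.image_univ, Set.mem_iUnion, Set.mem_range]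
end

section
/- Let a group G act on a simplicial tree T by graph automorphisms, let h ∈ G be a hyperbolic element and let L be the axis of h. Suppose there exist vertices x, y ∈ L such that pst_G(L) = pst_G([x,y]). Then there exists M > 0 such that for all vertices z, w ∈ L with d(z,w) ≥ M one has pst_G([z,w]) = pst_G(L). -/
/-- The pointwise stabilizer of a set of vertices. -/
def pstSet {G V : Type*} [Group G] [MulAction G V] (S : Set V) : Set G :=
  {g : G | ∀ s ∈ S, g • s = s}

/-- The geodesic segment between two vertices of a tree. -/
def seg {V : Type*} (T : SimpleGraph V) (x y : V) : Set V :=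
  {p : V | T.dist x p + T.dist p y = T.dist x y}

/-- The axis of an element: vertices moved exactly the translation length. -/
def axisSet {G V : Type*} [Group G] [MulAction G V] (T : SimpleGraph V) (h : G) : Set V :=
  {w : V | T.dist w (h • w) = sInf (Set.range fun u : V => T.dist u (h • u))}

/-!
The axis `L` of a hyperbolic `h` is a bi-infinite geodesic on which `h` translates by
`ℓ = ‖h‖`. Two facts about trees give this: geodesics extend (if `a, b, c` and `b, c, d` are in
order on geodesics and `b ≠ c`, so are `a, c, d`), which turns `h • u ∈ [u, h² • u]` into
`d(u, hⁿ • u) = n ℓ`; and every vertex `v` has a gate `p` into a segment, through which all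
geodesics from `v` to the segment pass, so that a `v` of displacement `ℓ` off the line would satisfy
`d(v, h • v) = 2 d(v, p) + d(p, h • p) > ℓ`.

So `[x, y]` lies in a segment `S = [a, h^(2K) • a]` of `L` with `a` in the `h`-orbit of `x`, and
`pst(S) = pst(L)`. Conjugating by powers of `h`, which preserve `L`, every translate of `S` along
`L` has the same pointwise stabilizer, and every subsegment of `L` of length at least `(2K+1) ℓ`
contains such a translate.
-/

namespace SimpleGraph

variable {V : Type*} {T : SimpleGraph V} {a b c d m p q r s v : V}

theorem mem_seg : p ∈ seg T a b ↔ T.dist a p + T.dist p b = T.dist a b := Iff.rfl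

theorem seg_comm (a b : V) : seg T a b = seg T b a := by
  ext p
  rw [mem_seg, mem_seg, dist_comm (u := a) (v := p), dist_comm (u := p) (v := b),
    dist_comm (u := a) (v := b), add_comm]

theorem left_mem_seg (a b : V) : a ∈ seg T a b := by simp [mem_seg]

theorem right_mem_seg (a b : V) : b ∈ seg T a b := by simp [mem_seg]

namespace Connected

variable (hT : T.Connected)
include hT

theorem seg_left_subset (hq : q ∈ seg T a b) : seg T a q ⊆ seg T a b := by
  intro p hp
  rw [mem_seg] at *
  have := hT.dist_triangle (u := p) (v := q) (w := b)
  have := hT.dist_triangle (u := a) (v := p) (w := b)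
  omega

theorem seg_right_subset (hq : q ∈ seg T a b) : seg T q b ⊆ seg T a b := by
  rw [seg_comm q, seg_comm a]
  exact hT.seg_left_subset (by rwa [seg_comm])

theorem exists_mem_seg_dist_eq {k : ℕ} (hk : k ≤ T.dist a b) :
    ∃ p ∈ seg T a b, T.dist a p = k := by
  obtain ⟨W, hW⟩ := hT.exists_walk_length_eq_dist a b
  have h₁ := T.dist_le (W.take k)
  have h₂ := T.dist_le (W.drop k)
  have h₃ := hT.dist_triangle (u := a) (v := W.getVert k) (w := b)
  simp only [Walk.take_length, Walk.drop_length, hW] at h₁ h₂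
  exact ⟨W.getVert k, by rw [mem_seg]; omega, by omega⟩

end Connected

namespace IsTree

variable (hT : T.IsTree)
include hT

theorem mem_support_iff_mem_seg (W : T.Walk a b) (hW : W.length = T.dist a b) :
    p ∈ W.support ↔ p ∈ seg T a b := by
  classical
  constructor
  · intro hp
    have hsplit := congrArg Walk.length (W.take_spec hp)
    rw [Walk.length_append] at hsplit
    have := T.dist_le (W.takeUntil p hp)
    have := T.dist_le (W.dropUntil p hp)
    have := hT.connected.dist_triangle (u := a) (v := p) (w := b)
    rw [mem_seg]
    omega
  · intro hp
    obtain ⟨W₁, hW₁⟩ := hT.connected.exists_walk_length_eq_dist a p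
    obtain ⟨W₂, hW₂⟩ := hT.connected.exists_walk_length_eq_dist p b
    have hlen : (W₁.append W₂).length = T.dist a b := by
      rw [Walk.length_append, hW₁, hW₂]
      exact hp
    have := (hT.isAcyclic.subsingleton_path a b).elim
      ⟨_, (W₁.append W₂).isPath_of_length_eq_dist hlen⟩ ⟨W, W.isPath_of_length_eq_dist hW⟩
    rw [← congrArg (fun P : T.Path a b => P.1.support) this]
    exact (Walk.mem_support_append_iff _ _).2 (Or.inl W₁.end_mem_support)

theorem seg_split (hq : q ∈ seg T a b) (hp : p ∈ seg T a b) :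
    p ∈ seg T a q ∨ p ∈ seg T q b := by
  classical
  obtain ⟨W, hW⟩ := hT.connected.exists_walk_length_eq_dist a b
  have hq' := (hT.mem_support_iff_mem_seg W hW).2 hq
  have hp' := (hT.mem_support_iff_mem_seg W hW).2 hp
  rw [← W.take_spec hq', Walk.mem_support_append_iff] at hp'
  have hsplit := congrArg Walk.length (W.take_spec hq')
  rw [Walk.length_append] at hsplit
  have := T.dist_le (W.takeUntil q hq')
  have := T.dist_le (W.dropUntil q hq')
  rw [mem_seg] at hq
  refine hp'.imp (fun h => (hT.mem_support_iff_mem_seg _ ?_).1 h)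
    (fun h => (hT.mem_support_iff_mem_seg _ ?_).1 h) <;> omega

theorem mem_seg_of_dist_le (hp : p ∈ seg T a b) (hq : q ∈ seg T a b)
    (hle : T.dist a p ≤ T.dist a q) : p ∈ seg T a q := by
  refine (hT.seg_split hq hp).elim id fun h => ?_
  rw [mem_seg] at hp hq h
  have := hT.connected.dist_triangle (u := a) (v := q) (w := p)
  have := hT.connected.dist_triangle (u := a) (v := p) (w := b)
  obtain rfl : q = p := hT.connected.dist_eq_zero_iff.1 (by omega)
  exact right_mem_seg a q

theorem eq_of_mem_seg_of_dist_eq (hp : p ∈ seg T a b) (hq : q ∈ seg T a b)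
    (hd : T.dist a p = T.dist a q) : p = q := by
  have h := hT.mem_seg_of_dist_le hp hq hd.le
  rw [mem_seg] at h
  exact hT.connected.dist_eq_zero_iff.1 (by omega)

theorem seg_subset_seg (hp : p ∈ seg T a b) (hq : q ∈ seg T a b) :
    seg T p q ⊆ seg T a b := by
  rcases le_total (T.dist a p) (T.dist a q) with hle | hle
  · exact (hT.connected.seg_right_subset (hT.mem_seg_of_dist_le hp hq hle)).trans
      (hT.connected.seg_left_subset hq)
  · rw [seg_comm]
    exact (hT.connected.seg_right_subset (hT.mem_seg_of_dist_le hq hp hle)).trans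
      (hT.connected.seg_left_subset hp)

theorem dist_eq_natAbs (hp : p ∈ seg T a b) (hq : q ∈ seg T a b) :
    T.dist p q = ((T.dist a p : ℤ) - T.dist a q).natAbs := by
  rcases le_total (T.dist a p) (T.dist a q) with hle | hle
  · have h := hT.mem_seg_of_dist_le hp hq hle
    rw [mem_seg] at h
    omega
  · have h := hT.mem_seg_of_dist_le hq hp hle
    rw [mem_seg, dist_comm (u := q)] at h
    omega

theorem mem_seg_of_dist_le_of_dist_le (hr : r ∈ seg T a b) (hs : s ∈ seg T a b)
    (hq : q ∈ seg T a b) (h₁ : T.dist a r ≤ T.dist a q) (h₂ : T.dist a q ≤ T.dist a s) :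
    q ∈ seg T r s := by
  have := hT.dist_eq_natAbs hr hq
  have := hT.dist_eq_natAbs hq hs
  have := hT.dist_eq_natAbs hr hs
  rw [mem_seg]
  omega

theorem mem_seg_of_seg_inter_seg (hbc : ∀ x ∈ seg T a b, x ∈ seg T b c → x = b) :
    b ∈ seg T a c := by
  -- the concatenated geodesics form a path, and paths in a tree are geodesics
  obtain ⟨W₁, hW₁⟩ := hT.connected.exists_walk_length_eq_dist a b
  obtain ⟨W₂, hW₂⟩ := hT.connected.exists_walk_length_eq_dist b c
  have hnodup := (W₂.isPath_of_length_eq_dist hW₂).support_nodup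
  rw [← W₂.cons_tail_support, List.nodup_cons] at hnodup
  have hpath : (W₁.append W₂).IsPath := by
    rw [Walk.isPath_def, Walk.support_append]
    refine (W₁.isPath_of_length_eq_dist hW₁).support_nodup.append hnodup.2 fun x hx₁ hx₂ => ?_
    obtain rfl := hbc x ((hT.mem_support_iff_mem_seg W₁ hW₁).1 hx₁)
      ((hT.mem_support_iff_mem_seg W₂ hW₂).1 (W₂.cons_tail_support ▸ List.mem_cons_of_mem _ hx₂))
    exact hnodup.1 hx₂
  obtain ⟨W, hW⟩ := hT.connected.exists_walk_length_eq_dist a c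
  have := (hT.isAcyclic.subsingleton_path a c).elim ⟨_, hpath⟩ ⟨W, W.isPath_of_length_eq_dist hW⟩
  have := congrArg (fun P : T.Path a c => P.1.length) this
  simp only [Walk.length_append] at this
  rw [mem_seg]
  omega

theorem exists_median (a b c : V) :
    ∃ m, m ∈ seg T a b ∧ m ∈ seg T b c ∧ m ∈ seg T a c := by
  classical
  -- `m` is a common point of `[b, a]` and `[b, c]` farthest from `b`
  let P : ℕ → Prop := fun n => ∃ x ∈ seg T b a, x ∈ seg T b c ∧ T.dist b x = n
  have hP0 : P 0 := ⟨b, left_mem_seg b a, left_mem_seg b c, dist_self⟩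
  obtain ⟨m, hma, hmc, hm⟩ := Nat.findGreatest_spec (Nat.zero_le (T.dist b a)) hP0
  have hmax : ∀ x ∈ seg T b a, x ∈ seg T b c → T.dist b x ≤ T.dist b m := fun x hxa hxc =>
    hm ▸ Nat.le_findGreatest (n := T.dist b a) (by rw [mem_seg] at hxa; omega) ⟨x, hxa, hxc, rfl⟩
  refine ⟨m, by rwa [seg_comm], hmc, hT.mem_seg_of_seg_inter_seg fun x hxa hxc => ?_⟩
  rw [seg_comm] at hxa
  have hx := hmax x (hT.connected.seg_right_subset hma hxa) (hT.connected.seg_right_subset hmc hxc)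
  rw [mem_seg] at hma hxa
  have := hT.connected.dist_triangle (u := b) (v := x) (w := a)
  have := hT.connected.dist_triangle (u := b) (v := m) (w := x)
  exact (hT.connected.dist_eq_zero_iff.1 (by omega)).symm

theorem mem_seg_of_mem_seg_of_mem_seg (hb : b ∈ seg T a c) (hc : c ∈ seg T b d) (hbc : b ≠ c) :
    c ∈ seg T a d := by
  obtain ⟨m, hmac, hmcd, hmad⟩ := hT.exists_median a c d
  rw [seg_comm] at hb hmac
  rcases le_total (T.dist c m) (T.dist c b) with hle | hle
  · have hm := hT.mem_seg_of_dist_le hmac hb hle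
    rw [mem_seg] at hm hmcd hc
    have := hT.connected.dist_triangle (u := b) (v := m) (w := d)
    rw [dist_comm (u := b) (v := c), dist_comm (u := b) (v := m)] at *
    obtain rfl : c = m := hT.connected.dist_eq_zero_iff.1 (by omega)
    exact hmad
  · have hbd := hT.connected.seg_left_subset hmcd (hT.mem_seg_of_dist_le hb hmac hle)
    rw [mem_seg] at hbd hc
    have := dist_comm (G := T) (u := c) (v := b)
    exact absurd (hT.connected.dist_eq_zero_iff.1 (by omega)) hbc

theorem exists_gate (a b v : V) : ∃ p ∈ seg T a b, ∀ q ∈ seg T a b, p ∈ seg T v q := by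
  obtain ⟨p, hpav, hpvb, hpab⟩ := hT.exists_median a v b
  refine ⟨p, hpab, fun q hq => ?_⟩
  rw [mem_seg] at hpav hpvb ⊢
  rcases hT.seg_split hpab hq with hq' | hq'
  · rw [mem_seg] at hq'
    have := hT.connected.dist_triangle (u := a) (v := q) (w := v)
    have := hT.connected.dist_triangle (u := q) (v := p) (w := v)
    rw [dist_comm (u := q) (v := v), dist_comm (u := q) (v := p), dist_comm (u := p) (v := v)] at *
    omega
  · rw [mem_seg] at hq'
    have := hT.connected.dist_triangle (u := v) (v := q) (w := b)
    have := hT.connected.dist_triangle (u := v) (v := p) (w := q)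
    omega

end IsTree

end SimpleGraph

namespace TreeAction

open SimpleGraph
open scoped Pointwise

variable {V G : Type*} [Group G] [MulAction G V] {T : SimpleGraph V}

def IsElliptic (T : SimpleGraph V) (h : G) : Prop :=
  (∃ w : V, h • w = w) ∨ ∃ a b : V, T.Adj a b ∧ h • a = b ∧ h • b = a

noncomputable def transLength (T : SimpleGraph V) (h : G) : ℕ :=
  sInf (Set.range fun u : V => T.dist u (h • u))

theorem mem_axisSet_iff {h : G} {u : V} :
    u ∈ axisSet T h ↔ T.dist u (h • u) = transLength T h := Iff.rfl

theorem transLength_le_dist (T : SimpleGraph V) (h : G) (u : V) :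
    transLength T h ≤ T.dist u (h • u) :=
  Nat.sInf_le ⟨u, rfl⟩

theorem one_le_transLength (hT : T.Connected) {h : G} (hh : ¬IsElliptic T h) {u : V}
    (hu : u ∈ axisSet T h) : 1 ≤ transLength T h := by
  rw [mem_axisSet_iff] at hu
  by_contra
  exact hh (Or.inl ⟨u, (hT.dist_eq_zero_iff.1 (by omega)).symm⟩)

theorem pstSet_anti {S S' : Set V} (hS : S ⊆ S') : pstSet (G := G) S' ⊆ pstSet S :=
  fun _ hg s hs => hg s (hS hs)

theorem pstSet_eq_of_subset {S S' A : Set V} (hS : S ⊆ S') (hS' : S' ⊆ A)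
    (h : pstSet (G := G) S = pstSet A) : pstSet (G := G) S' = pstSet A :=
  (h ▸ pstSet_anti hS).antisymm (pstSet_anti hS')

theorem mem_pstSet_smul_iff {g k : G} {S : Set V} :
    k ∈ pstSet (g • S) ↔ g⁻¹ * k * g ∈ pstSet S := by
  show (∀ s ∈ g • S, k • s = s) ↔ ∀ s ∈ S, (g⁻¹ * k * g) • s = s
  simp only [← Set.image_smul, Set.forall_mem_image, mul_smul, inv_smul_eq_iff]

theorem pstSet_smul_eq {g : G} {S A : Set V} (hA : g • A = A) (h : pstSet (G := G) S = pstSet A) :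
    pstSet (G := G) (g • S) = pstSet A := by
  ext k
  rw [mem_pstSet_smul_iff, h, ← mem_pstSet_smul_iff, hA]

section Automorphisms

variable (haut : ∀ (g : G) (a b : V), T.Adj (g • a) (g • b) ↔ T.Adj a b)
include haut

theorem dist_smul_le (hT : T.Connected) (g : G) (a b : V) :
    T.dist (g • a) (g • b) ≤ T.dist a b := by
  obtain ⟨W, hW⟩ := hT.exists_walk_length_eq_dist a b
  let f : T →g T := ⟨(g • ·), (haut g _ _).2⟩
  exact (T.dist_le (W.map f)).trans_eq (by rw [Walk.length_map, hW])

theorem dist_smul (hT : T.Connected) (g : G) (a b : V) :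
    T.dist (g • a) (g • b) = T.dist a b := by
  refine (dist_smul_le haut hT g a b).antisymm ?_
  simpa using dist_smul_le haut hT g⁻¹ (g • a) (g • b)

theorem smul_mem_seg_smul_iff (hT : T.Connected) {g : G} {a b p : V} :
    g • p ∈ seg T (g • a) (g • b) ↔ p ∈ seg T a b := by
  simp only [mem_seg, dist_smul haut hT]

theorem smul_seg (hT : T.Connected) (g : G) (a b : V) :
    g • seg T a b = seg T (g • a) (g • b) := by
  ext p
  rw [Set.mem_smul_set_iff_inv_smul_mem, ← smul_mem_seg_smul_iff haut hT (g := g), smul_inv_smul]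

theorem smul_mem_axisSet_iff (hT : T.Connected) {g h : G} (hg : Commute g h) {v : V} :
    g • v ∈ axisSet T h ↔ v ∈ axisSet T h := by
  rw [mem_axisSet_iff, mem_axisSet_iff, smul_smul, ← hg.eq, mul_smul, dist_smul haut hT]

theorem smul_axisSet (hT : T.Connected) {g h : G} (hg : Commute g h) :
    g • axisSet T h = axisSet T h := by
  ext v
  rw [Set.mem_smul_set_iff_inv_smul_mem, smul_mem_axisSet_iff haut hT hg.inv_left]

theorem isElliptic_of_smul_smul_eq (hT : T.IsTree) {h : G} {u : V} (hu : h • h • u = u) :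
    IsElliptic T h := by
  set ℓ := T.dist u (h • u)
  -- `h` swaps `u` and `h • u`, so it reverses the segment between them
  have hrev : ∀ c ∈ seg T u (h • u),
      h • c ∈ seg T u (h • u) ∧ T.dist u (h • c) + T.dist u c = ℓ := by
    intro c hc
    have hhc := (smul_mem_seg_smul_iff haut hT.connected (g := h)).2 hc
    rw [hu, seg_comm] at hhc
    refine ⟨hhc, ?_⟩
    have := dist_smul haut hT.connected h u c
    rw [mem_seg, dist_comm (u := h • c)] at hhc
    omega
  obtain ⟨c, hc, hcd⟩ := hT.connected.exists_mem_seg_dist_eq (a := u) (b := h • u) (k := ℓ / 2)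
    (by omega)
  obtain ⟨hhc, hhcd⟩ := hrev c hc
  rcases Nat.even_or_odd ℓ with ⟨r, hr⟩ | ⟨r, hr⟩
  · exact Or.inl ⟨c, hT.eq_of_mem_seg_of_dist_eq hhc hc (by omega)⟩
  · obtain ⟨c', hc', hc'd⟩ := hT.connected.exists_mem_seg_dist_eq (a := u) (b := h • u)
      (k := ℓ / 2 + 1) (by omega)
    obtain ⟨hhc', hhc'd⟩ := hrev c' hc'
    have hcc' := hT.dist_eq_natAbs hc hc'
    exact Or.inr ⟨c, c', dist_eq_one_iff_adj.1 (by omega),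
      hT.eq_of_mem_seg_of_dist_eq hhc hc' (by omega),
      hT.eq_of_mem_seg_of_dist_eq hhc' hc (by omega)⟩

theorem smul_mem_seg_pow_smul_iff (hT : T.Connected) {h : G} {u p : V} {i j : ℕ} :
    h • p ∈ seg T (h ^ (i + 1) • u) (h ^ (j + 1) • u) ↔ p ∈ seg T (h ^ i • u) (h ^ j • u) := by
  rw [pow_succ', pow_succ', mul_smul, mul_smul, smul_mem_seg_smul_iff haut hT]

theorem pstSet_seg_pow_smul_eq (hT : T.Connected) {h : G} {u : V} {k : ℕ}
    (hS : pstSet (seg T u (h ^ k • u)) = pstSet (G := G) (axisSet T h)) (i m : ℕ) :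
    pstSet (seg T (h ^ i • (h ^ m)⁻¹ • u) (h ^ (i + k) • (h ^ m)⁻¹ • u)) =
      pstSet (G := G) (axisSet T h) := by
  have e : h ^ (i + k) * (h ^ m)⁻¹ = h ^ i * (h ^ m)⁻¹ * h ^ k := by group
  rw [← mul_smul, ← mul_smul, e, mul_smul _ (h ^ k), ← smul_seg haut hT]
  exact pstSet_smul_eq (smul_axisSet haut hT
    (((Commute.refl h).pow_left i).mul_left ((Commute.refl h).pow_left m).inv_left)) hS

section Hyperbolic

variable (hT : T.IsTree) {h : G} (hh : ¬IsElliptic T h) {u : V} (hu : u ∈ axisSet T h)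
include hT hh hu

theorem smul_mem_seg_smul_smul : h • u ∈ seg T u (h • h • u) := by
  rw [mem_axisSet_iff] at hu
  obtain ⟨m, hm₁, hm₂, hm₃⟩ := hT.exists_median u (h • u) (h • h • u)
  -- `h⁻¹ • m` and `m` lie on `[u, h • u]` at distances `d(h • u, m)` and `d(u, m)` from `u`;
  -- as `h` moves `h⁻¹ • m` at least `ℓ`, one of these distances vanishes.
  have hm₁' : h⁻¹ • m ∈ seg T u (h • u) :=
    (smul_mem_seg_smul_iff haut hT.connected).1 (by rwa [smul_inv_smul])
  have hdisp := transLength_le_dist T h (h⁻¹ • m)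
  have hk : T.dist u (h⁻¹ • m) = T.dist (h • u) m := by
    rw [← dist_smul haut hT.connected h, smul_inv_smul]
  rw [smul_inv_smul, hT.dist_eq_natAbs hm₁' hm₁, hk] at hdisp
  have hhu := dist_smul haut hT.connected h u (h • u)
  rw [mem_seg] at hm₁ hm₂
  rw [dist_comm (u := m)] at hm₁
  rcases Nat.eq_zero_or_pos (T.dist (h • u) m) with h0 | h0
  · rwa [← hT.connected.dist_eq_zero_iff.1 h0] at hm₃
  · obtain rfl : u = m := hT.connected.dist_eq_zero_iff.1 (by omega)
    have hsq : h • h • u = u := (hT.connected.dist_eq_zero_iff.1 (by omega)).symm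
    exact absurd (isElliptic_of_smul_smul_eq haut hT hsq) hh

theorem pow_smul_mem_seg (n : ℕ) : h ^ n • u ∈ seg T u (h ^ (n + 1) • u) := by
  induction n with
  | zero => simpa using left_mem_seg u (h • u)
  | succ n ih =>
    have hn := (smul_mem_axisSet_iff haut hT.connected ((Commute.refl h).pow_left n)).2 hu
    have hstep := smul_mem_seg_smul_smul haut hT hh hn
    simp only [smul_smul, ← pow_succ'] at hstep
    refine hT.mem_seg_of_mem_seg_of_mem_seg ih hstep fun heq => hh (Or.inl ⟨h ^ n • u, ?_⟩)
    rw [smul_smul, ← pow_succ', heq]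

theorem dist_pow_smul (n : ℕ) : T.dist u (h ^ n • u) = n * transLength T h := by
  induction n with
  | zero => simp
  | succ n ih =>
    have := pow_smul_mem_seg haut hT hh hu n
    rw [mem_seg, ih, pow_succ, mul_smul, dist_smul haut hT.connected, mem_axisSet_iff.1 hu] at this
    rw [pow_succ, mul_smul, ← this]
    ring

theorem dist_pow_smul_pow_smul {i j : ℕ} (hij : i ≤ j) :
    T.dist (h ^ i • u) (h ^ j • u) = (j - i) * transLength T h := by
  obtain ⟨k, rfl⟩ := Nat.exists_eq_add_of_le hij
  rw [pow_add, mul_smul, dist_smul haut hT.connected, dist_pow_smul haut hT hh hu,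
    Nat.add_sub_cancel_left]

theorem pow_smul_mem_seg_pow_smul {i n : ℕ} (hin : i ≤ n) : h ^ i • u ∈ seg T u (h ^ n • u) := by
  rw [mem_seg, dist_pow_smul haut hT hh hu, dist_pow_smul_pow_smul haut hT hh hu hin,
    dist_pow_smul haut hT hh hu, ← add_mul, Nat.add_sub_cancel' hin]

theorem seg_pow_smul_subset {i j n : ℕ} (hij : i ≤ j) (hjn : j ≤ n) :
    seg T (h ^ i • u) (h ^ j • u) ⊆ seg T u (h ^ n • u) :=
  hT.seg_subset_seg (pow_smul_mem_seg_pow_smul haut hT hh hu (hij.trans hjn))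
    (pow_smul_mem_seg_pow_smul haut hT hh hu hjn)

theorem seg_pow_smul_subset_axisSet (n : ℕ) : seg T u (h ^ n • u) ⊆ axisSet T h := by
  intro p hp
  have hpB := seg_pow_smul_subset haut hT hh hu (Nat.zero_le n) n.le_succ (by simpa using hp)
  have hhpB : h • p ∈ seg T u (h ^ (n + 1) • u) :=
    seg_pow_smul_subset haut hT hh hu (Nat.le_add_left 1 n) le_rfl
      ((smul_mem_seg_pow_smul_iff haut hT.connected (i := 0)).2 (by simpa using hp))
  have hd : T.dist u (h • p) = T.dist u p + transLength T h := by
    have := hT.connected.dist_triangle (u := u) (v := h • u) (w := h • p)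
    have := hT.connected.dist_triangle (u := u) (v := h • p) (w := h ^ (n + 1) • u)
    have := dist_smul haut hT.connected h u p
    have := dist_smul haut hT.connected h p (h ^ n • u)
    rw [smul_smul, ← pow_succ'] at this
    rw [mem_seg, dist_pow_smul haut hT hh hu] at hp
    have := dist_pow_smul haut hT hh hu (n + 1)
    rw [mem_axisSet_iff] at hu
    rw [add_mul, one_mul] at this
    omega
  have := hT.mem_seg_of_dist_le hpB hhpB (by omega)
  rw [mem_seg, hd] at this
  rw [mem_axisSet_iff]
  omega

/-- The geodesic from `u` to `h • u` runs through the gate `p` and through `h • p`, so it is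
longer than `ℓ` unless `u = p`. -/
theorem eq_of_forall_mem_seg {S : Set V} {p : V} (hgate : ∀ q ∈ S, p ∈ seg T u q)
    (hp₁ : h • p ∈ S) (hp₂ : h⁻¹ • p ∈ S) : u = p := by
  have h₁ : p ∈ seg T u (h • p) := hgate _ hp₁
  have h₂ : h • p ∈ seg T p (h • u) := by
    rw [seg_comm, ← smul_inv_smul h p, smul_mem_seg_smul_iff haut hT.connected, smul_inv_smul]
    exact hgate _ hp₂
  have h₃ := hT.mem_seg_of_mem_seg_of_mem_seg h₁ h₂ fun heq => hh (Or.inl ⟨p, heq.symm⟩)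
  have := transLength_le_dist T h p
  have := dist_smul haut hT.connected h p u
  have := dist_comm (G := T) (u := p) (v := u)
  rw [mem_seg] at h₁ h₃
  rw [mem_axisSet_iff] at hu
  exact hT.connected.dist_eq_zero_iff.1 (by omega)

theorem mem_seg_of_dist_lt {v : V} (hv : v ∈ axisSet T h) {m : ℕ}
    (hm : T.dist (h ^ m • u) v < m) : v ∈ seg T u (h ^ (2 * m) • u) := by
  obtain ⟨n, rfl⟩ : ∃ n, m = n + 1 := ⟨m - 1, by omega⟩
  have hℓ := one_le_transLength hT.connected hh hu
  have hI {i j : ℕ} (hij : i ≤ j) (hj : j ≤ 2 * (n + 1)) := seg_pow_smul_subset haut hT hh hu hij hj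
  obtain ⟨p, hpI, hgate⟩ := hT.exists_gate u (h ^ (2 * (n + 1)) • u) v
  -- the gate `p` is within `n` of the midpoint `h ^ (n + 1) • u`, hence away from the ends
  have hp : p ∈ seg T (h ^ 1 • u) (h ^ (2 * n + 1) • u) := by
    have hmid := pow_smul_mem_seg_pow_smul haut hT hh hu (i := n + 1) (n := 2 * (n + 1)) (by omega)
    have h₁ := hgate _ hmid
    have h₂ := hT.dist_eq_natAbs hmid hpI
    rw [dist_pow_smul haut hT hh hu, add_mul, one_mul] at h₂
    push_cast at h₂
    rw [mem_seg] at h₁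
    have := dist_comm (G := T) (u := v) (v := h ^ (n + 1) • u)
    have := dist_comm (G := T) (u := p) (v := h ^ (n + 1) • u)
    have := Nat.le_mul_of_pos_right n hℓ
    have : (2 * n + 1) * transLength T h = 2 * (n * transLength T h) + transLength T h := by ring
    refine hT.mem_seg_of_dist_le_of_dist_le
      (pow_smul_mem_seg_pow_smul haut hT hh hu (by omega))
      (pow_smul_mem_seg_pow_smul haut hT hh hu (by omega)) hpI ?_ ?_ <;>
    · rw [dist_pow_smul haut hT hh hu]
      omega
  have hp₁ : h • p ∈ seg T (h ^ 2 • u) (h ^ (2 * n + 2) • u) :=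
    (smul_mem_seg_pow_smul_iff haut hT.connected).2 hp
  have hp₂ : h⁻¹ • p ∈ seg T (h ^ 0 • u) (h ^ (2 * n) • u) :=
    (smul_mem_seg_pow_smul_iff haut hT.connected).1 (by rw [smul_inv_smul]; exact hp)
  obtain rfl : v = p := eq_of_forall_mem_seg haut hT hh hv hgate
    (hI (by omega) (by omega) hp₁) (hI (by omega) (by omega) hp₂)
  exact hpI

theorem exists_seg_pow_smul_subset_seg {z w : V} {N k : ℕ} (hz : z ∈ seg T u (h ^ N • u))
    (hw : w ∈ seg T u (h ^ N • u)) (hzw : (k + 1) * transLength T h ≤ T.dist z w) :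
    ∃ i, seg T (h ^ i • u) (h ^ (i + k) • u) ⊆ seg T z w := by
  wlog hle : T.dist u z ≤ T.dist u w generalizing z w
  · obtain ⟨i, hi⟩ := this hw hz (by rwa [dist_comm]) (by omega)
    exact ⟨i, seg_comm z w ▸ hi⟩
  have hℓ := one_le_transLength hT.connected hh hu
  have hpow (j : ℕ) := dist_pow_smul haut hT hh hu j
  have hzw' := hT.dist_eq_natAbs hz hw
  have hwN := hw
  rw [mem_seg, hpow] at hwN
  generalize transLength T h = ℓ at hℓ hpow hzw hwN
  -- `q + 1` is the first index with `h ^ (q + 1) • u` strictly beyond `z`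
  have hdiv := Nat.div_add_mod (T.dist u z) ℓ
  generalize T.dist u z / ℓ = q at hdiv
  have hmod := Nat.mod_lt (T.dist u z) hℓ
  have hiℓ : (q + 1) * ℓ = ℓ * q + ℓ := by ring
  have hikℓ : (q + 1 + k) * ℓ = ℓ * q + ℓ + k * ℓ := by ring
  have hkℓ : (k + 1) * ℓ = k * ℓ + ℓ := by ring
  have hiN : q + 1 + k ≤ N := Nat.le_of_mul_le_mul_right (by omega) hℓ
  refine ⟨q + 1, hT.seg_subset_seg ?_ ?_⟩ <;>
  · refine hT.mem_seg_of_dist_le_of_dist_le hz hw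
      (pow_smul_mem_seg_pow_smul haut hT hh hu (by omega)) ?_ ?_ <;>
    · rw [hpow]
      omega

end Hyperbolic

end Automorphisms

end TreeAction

open SimpleGraph TreeAction

/-- if the pointwise stabilizer of the axis `L` of a hyperbolic element `h`
equals the pointwise stabilizer of a finite subsegment `[x,y]` of `L`, then there is `M > 0`
such that any subsegment of `L` of length at least `M` has the same pointwise stabilizer. -/
theorem stmt_11 {V G : Type*} [Group G] [MulAction G V] (T : SimpleGraph V)
    (hT : T.IsTree)
    (haut : ∀ (g : G) (a b : V), T.Adj (g • a) (g • b) ↔ T.Adj a b)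
    (h : G)
    (hhyp : ¬ ((∃ w : V, h • w = w) ∨ ∃ a b : V, T.Adj a b ∧ h • a = b ∧ h • b = a))
    (hxy : ∃ x ∈ axisSet T h, ∃ y ∈ axisSet T h,
      pstSet (G := G) (axisSet T h) = pstSet (seg T x y)) :
    ∃ M : ℕ, 0 < M ∧ ∀ z ∈ axisSet T h, ∀ w ∈ axisSet T h,
      M ≤ T.dist z w → pstSet (G := G) (seg T z w) = pstSet (axisSet T h) := by
  obtain ⟨x, hx, y, hy, hxy⟩ := hxy
  have hcomm (n : ℕ) : Commute (h ^ n)⁻¹ h := ((Commute.refl h).pow_left n).inv_left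
  -- `[x, y]` sits in the segment `[a, h ^ (2K) • a]` centred at `x`
  set K := T.dist x y + 1
  set a := (h ^ K)⁻¹ • x
  have hax : h ^ K • a = x := smul_inv_smul _ _
  have ha : a ∈ axisSet T h := (smul_mem_axisSet_iff haut hT.connected (hcomm K)).2 hx
  have hS : pstSet (seg T a (h ^ (2 * K) • a)) = pstSet (G := G) (axisSet T h) :=
    pstSet_eq_of_subset
      (hT.seg_subset_seg (mem_seg_of_dist_lt haut hT hhyp ha hx (by rw [hax, dist_self]; omega))
        (mem_seg_of_dist_lt haut hT hhyp ha hy (by rw [hax]; omega)))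
      (seg_pow_smul_subset_axisSet haut hT hhyp ha _) hxy.symm
  refine ⟨(2 * K + 1) * transLength T h,
    Nat.mul_pos (Nat.succ_pos _) (one_le_transLength hT.connected hhyp hx), ?_⟩
  intro z hz w hw hzw
  -- locate `z` and `w` on a segment `[c, h ^ (2m) • c]` centred at `a`
  set m := T.dist a z + T.dist a w + 1
  set c := (h ^ m)⁻¹ • a
  have hca : h ^ m • c = a := smul_inv_smul _ _
  have hc : c ∈ axisSet T h := (smul_mem_axisSet_iff haut hT.connected (hcomm m)).2 ha
  have hz' := mem_seg_of_dist_lt haut hT hhyp hc hz (by rw [hca]; omega)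
  have hw' := mem_seg_of_dist_lt haut hT hhyp hc hw (by rw [hca]; omega)
  obtain ⟨i, hi⟩ := exists_seg_pow_smul_subset_seg haut hT hhyp hc hz' hw' hzw
  exact pstSet_eq_of_subset hi
    ((hT.seg_subset_seg hz' hw').trans (seg_pow_smul_subset_axisSet haut hT hhyp hc _))
    (pstSet_seg_pow_smul_eq haut hT.connected hS i m)
end

section
/- Let G = Γ𝒢 be the graph product of a family of nontrivial groups over a finite simple graph Γ with vertex set V. Let P = g₁G_Sg₁⁻¹ and Q = g₂G_Tg₂⁻¹ be parabolic subgroups of G (S, T ⊆ V, g₁, g₂ ∈ G). Then: (a) if P ⊆ Q then |S| ≤ |T|, and if moreover |S| = |T| then P = Q; (b) if P ∩ Q = g₃G_Rg₃⁻¹ for some R ⊆ V and g₃ ∈ G, and |S| ≤ |R|, then P ⊆ Q. -/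
variable {V : Type*} [Fintype V] (Γ : SimpleGraph V) (Gv : V → Type*) [∀ v, Group (Gv v)]

open scoped commutatorElement

/-- The commutation relators defining the graph product. -/
def graphProdRels : Set (Monoid.CoprodI Gv) :=
  {x | ∃ (u v : V) (g : Gv u) (h : Gv v), Γ.Adj u v ∧
        x = ⁅Monoid.CoprodI.of g, Monoid.CoprodI.of h⁆}

/-- The graph product of the family `Gv` over the graph `Γ`: the quotient of the free
product by the normal closure of the commutation relators. -/
def GraphProduct : Type _ :=
  Monoid.CoprodI Gv ⧸ Subgroup.normalClosure (graphProdRels Γ Gv)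

instance : Group (GraphProduct Γ Gv) :=
  inferInstanceAs (Group (Monoid.CoprodI Gv ⧸ Subgroup.normalClosure (graphProdRels Γ Gv)))

/-- The canonical homomorphism from a vertex group to the graph product. -/
def GraphProduct.of (v : V) : Gv v →* GraphProduct Γ Gv :=
  (QuotientGroup.mk' (Subgroup.normalClosure (graphProdRels Γ Gv))).comp Monoid.CoprodI.of

/-- The full subgroup generated by the vertex groups with vertices in `A`. -/
def fullSubgroup (A : Set V) : Subgroup (GraphProduct Γ Gv) :=
  Subgroup.closure (⋃ v ∈ A, Set.range (GraphProduct.of Γ Gv v))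

/-- The conjugate `g H g⁻¹` of a subgroup. -/
def conjSubgroup {G : Type*} [Group G] (g : G) (H : Subgroup G) : Subgroup G :=
  Subgroup.map (MulAut.conj g).toMonoidHom H

/-- Parabolic subgroups of the graph product: conjugates of full subgroups. -/
def IsParabolic (P : Subgroup (GraphProduct Γ Gv)) : Prop :=
  ∃ (A : Set V) (g : GraphProduct Γ Gv), P = conjSubgroup g (fullSubgroup Γ Gv A)

/-- The link of a set of vertices: vertices adjacent to every vertex of `A`. -/
def linkSet (A : Set V) : Set V := {u : V | ∀ a ∈ A, Γ.Adj u a}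


/-!
Killing the vertex groups outside `A` is a retraction `π_A` of the graph product onto `G_A`.
If `g G_S g⁻¹ ≤ G_T` and `s ∈ S \ T`, then for `1 ≠ x ∈ G_s` the element `g x g⁻¹` lies in `G_T`
but is killed by `π_T`, so it is trivial, which is absurd; hence `S ⊆ T`. If `g G_T g⁻¹ ≤ G_T`,
the retraction shows that `g` normalises `G_T`, so an inclusion of parabolic subgroups with the
same support is an equality. Part (b) applies both facts to `g₃ G_R g₃⁻¹ = P ⊓ Q ≤ P`.
-/

open scoped Pointwise

section Conjugation

variable {G : Type*} [Group G]

theorem conjSubgroup_eq_smul (g : G) (H : Subgroup G) :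
    conjSubgroup g H = ConjAct.toConjAct g • H :=
  rfl

theorem conjSubgroup_le_conjSubgroup_iff {a b : G} {H K : Subgroup G} :
    conjSubgroup a H ≤ conjSubgroup b K ↔ conjSubgroup (b⁻¹ * a) H ≤ K := by
  rw [conjSubgroup_eq_smul, conjSubgroup_eq_smul, conjSubgroup_eq_smul, map_mul, map_inv,
    mul_smul]
  exact Subgroup.subset_pointwise_smul_iff

theorem conjSubgroup_eq_conjSubgroup_iff {a b : G} {H : Subgroup G} :
    conjSubgroup a H = conjSubgroup b H ↔ b⁻¹ * a ∈ Subgroup.normalizer H := by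
  rw [← Subgroup.conjAct_pointwise_smul_iff, conjSubgroup_eq_smul, conjSubgroup_eq_smul, map_mul,
    map_inv, mul_smul, inv_smul_eq_iff]

end Conjugation

section Retraction

variable {G : Type*} [Group G] {F : Subgroup G} {π : G →* G}

theorem eq_one_of_conj_mem_of_retraction (hπ : ∀ x ∈ F, π x = x) {g x : G} (hx : π x = 1)
    (hgx : g * x * g⁻¹ ∈ F) : x = 1 := by
  have : g * x * g⁻¹ = 1 := by
    rw [← hπ _ hgx, map_mul, map_mul, hx, mul_one, map_inv, mul_inv_cancel]
  simpa using this

/-- Writing `g = n * π g`, the factor `n` lies in the kernel of `π`; as it conjugates `F` into `F`,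
applying `π` shows that it centralises `F`. -/
theorem mem_normalizer_of_conjSubgroup_le_of_retraction (hπF : ∀ x, π x ∈ F)
    (hπ : ∀ x ∈ F, π x = x) {g : G} (hle : conjSubgroup g F ≤ F) : g ∈ Subgroup.normalizer F := by
  set t := π g
  set n := g * t⁻¹
  have hn : π n = 1 := by rw [map_mul, map_inv, hπ t (hπF g), mul_inv_cancel]
  have hn_centralizer : n ∈ Subgroup.centralizer (F : Set G) := by
    rw [Subgroup.mem_centralizer_iff]
    intro x hx
    have hconj : n * x * n⁻¹ ∈ F := by
      have htxt : t⁻¹ * x * t ∈ F := F.mul_mem (F.mul_mem (F.inv_mem (hπF g)) hx) (hπF g)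
      simpa [n, mul_assoc] using hle (Subgroup.mem_map_of_mem _ htxt)
    have : n * x * n⁻¹ = x := by
      rw [← hπ _ hconj, map_mul, map_mul, map_inv, hn, hπ x hx, one_mul, inv_one, mul_one]
    exact eq_mul_inv_iff_mul_eq.mp this.symm
  rw [← inv_mul_cancel_right g t]
  exact mul_mem (Subgroup.centralizer_le_normalizer _ hn_centralizer)
    (Subgroup.le_normalizer (hπF g))

end Retraction

namespace GraphProduct

variable {V : Type*} {Γ : SimpleGraph V} {Gv : V → Type*} [∀ v, Group (Gv v)]

theorem of_commute {u v : V} (h : Γ.Adj u v) (x : Gv u) (y : Gv v) :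
    Commute (of Γ Gv u x) (of Γ Gv v y) := by
  rw [← commutatorElement_eq_one_iff_commute]
  exact (QuotientGroup.eq_one_iff _).2 <| Subgroup.subset_normalClosure ⟨u, v, x, y, h, rfl⟩

variable (Γ) in
def lift {H : Type*} [Group H] (f : ∀ v, Gv v →* H)
    (hf : ∀ ⦃u v⦄, Γ.Adj u v → ∀ (x : Gv u) (y : Gv v), Commute (f u x) (f v y)) :
    GraphProduct Γ Gv →* H :=
  QuotientGroup.lift _ (Monoid.CoprodI.lift f) <| Subgroup.normalClosure_le_normal <| by
    rintro _ ⟨u, v, x, y, h, rfl⟩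
    simpa [map_commutatorElement, commutatorElement_eq_one_iff_commute] using hf h x y

variable {H : Type*} [Group H] {f : ∀ v, Gv v →* H}
  {hf : ∀ ⦃u v⦄, Γ.Adj u v → ∀ (x : Gv u) (y : Gv v), Commute (f u x) (f v y)}

@[simp]
theorem lift_of (v : V) (x : Gv v) : lift Γ f hf (of Γ Gv v x) = f v x :=
  Monoid.CoprodI.lift_of f x

theorem range_lift_le {K : Subgroup H} (hK : ∀ v, (f v).range ≤ K) : (lift Γ f hf).range ≤ K := by
  rintro _ ⟨x, rfl⟩
  obtain ⟨y, rfl⟩ := QuotientGroup.mk'_surjective _ x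
  exact Monoid.CoprodI.lift_range_le Gv f hK ⟨y, rfl⟩

theorem of_injective (v : V) : Function.Injective (of Γ Gv v) := by
  classical
  let toPi : GraphProduct Γ Gv →* ∀ v, Gv v :=
    lift Γ (MonoidHom.mulSingle Gv) fun _ _ h x y => Pi.mulSingle_commute h.ne x y
  refine Function.Injective.of_comp (f := toPi) ?_
  have htoPi : ∀ x, toPi (of Γ Gv v x) = Pi.mulSingle v x := lift_of v
  simpa [Function.comp_def, htoPi] using Pi.mulSingle_injective v

theorem of_mem_fullSubgroup {A : Set V} {v : V} (hv : v ∈ A) (x : Gv v) :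
    of Γ Gv v x ∈ fullSubgroup Γ Gv A :=
  Subgroup.subset_closure (Set.mem_biUnion hv (Set.mem_range_self x))

open scoped Classical in
variable (Γ Gv) in
noncomputable def retraction (A : Set V) : GraphProduct Γ Gv →* GraphProduct Γ Gv :=
  lift Γ (fun v => if v ∈ A then of Γ Gv v else 1) fun u v h x y => by
    split_ifs <;> simp [of_commute h]

theorem retraction_of_mem {A : Set V} {v : V} (hv : v ∈ A) (x : Gv v) :
    retraction Γ Gv A (of Γ Gv v x) = of Γ Gv v x := by
  simp [retraction, hv]

theorem retraction_of_notMem {A : Set V} {v : V} (hv : v ∉ A) (x : Gv v) :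
    retraction Γ Gv A (of Γ Gv v x) = 1 := by
  simp [retraction, hv]

theorem retraction_mem_fullSubgroup (A : Set V) (x : GraphProduct Γ Gv) :
    retraction Γ Gv A x ∈ fullSubgroup Γ Gv A := by
  refine range_lift_le (fun v => ?_) ⟨x, rfl⟩
  split_ifs with hv
  · rintro _ ⟨y, rfl⟩
    exact of_mem_fullSubgroup hv y
  · simp

theorem retraction_eq_self {A : Set V} {x : GraphProduct Γ Gv} (hx : x ∈ fullSubgroup Γ Gv A) :
    retraction Γ Gv A x = x := by
  refine MonoidHom.eqOn_closure (g := MonoidHom.id _) ?_ hx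
  simp only [Set.EqOn, Set.mem_iUnion₂, Set.mem_range]
  rintro _ ⟨v, hv, y, rfl⟩
  exact retraction_of_mem hv y

theorem subset_of_conjSubgroup_le_conjSubgroup [∀ v, Nontrivial (Gv v)] {S T : Set V}
    {g₁ g₂ : GraphProduct Γ Gv}
    (h : conjSubgroup g₁ (fullSubgroup Γ Gv S) ≤ conjSubgroup g₂ (fullSubgroup Γ Gv T)) :
    S ⊆ T := by
  rw [conjSubgroup_le_conjSubgroup_iff] at h
  intro s hs
  by_contra hsT
  obtain ⟨x, hx⟩ := exists_ne (1 : Gv s)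
  have hconj := h (Subgroup.mem_map_of_mem _ (of_mem_fullSubgroup hs x))
  have hof : of Γ Gv s x = 1 := eq_one_of_conj_mem_of_retraction (fun _ => retraction_eq_self)
    (retraction_of_notMem hsT x) hconj
  exact hx ((injective_iff_map_eq_one _).1 (of_injective s) x hof)

theorem conjSubgroup_eq_of_le {A : Set V} {g₁ g₂ : GraphProduct Γ Gv}
    (h : conjSubgroup g₁ (fullSubgroup Γ Gv A) ≤ conjSubgroup g₂ (fullSubgroup Γ Gv A)) :
    conjSubgroup g₁ (fullSubgroup Γ Gv A) = conjSubgroup g₂ (fullSubgroup Γ Gv A) :=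
  conjSubgroup_eq_conjSubgroup_iff.2 <|
    mem_normalizer_of_conjSubgroup_le_of_retraction (retraction_mem_fullSubgroup A)
      (fun _ => retraction_eq_self) (conjSubgroup_le_conjSubgroup_iff.1 h)

end GraphProduct

/-- comparison of parabolic subgroups via the sizes of their supports. -/
theorem stmt_12 [∀ v, Nontrivial (Gv v)]
    (S T : Finset V) (g₁ g₂ : GraphProduct Γ Gv)
    (P Q : Subgroup (GraphProduct Γ Gv))
    (hP : P = conjSubgroup g₁ (fullSubgroup Γ Gv (S : Set V)))
    (hQ : Q = conjSubgroup g₂ (fullSubgroup Γ Gv (T : Set V))) :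
    (P ≤ Q → S.card ≤ T.card ∧ (S.card = T.card → P = Q)) ∧
    (∀ (R : Finset V) (g₃ : GraphProduct Γ Gv),
      P ⊓ Q = conjSubgroup g₃ (fullSubgroup Γ Gv (R : Set V)) →
      S.card ≤ R.card → P ≤ Q) := by
  subst hP hQ
  refine ⟨fun hPQ => ?_, fun R g₃ hR hcard => ?_⟩
  · have hST := Finset.coe_subset.1 (GraphProduct.subset_of_conjSubgroup_le_conjSubgroup hPQ)
    refine ⟨Finset.card_le_card hST, fun hcard => ?_⟩
    obtain rfl := Finset.eq_of_subset_of_card_le hST hcard.ge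
    exact GraphProduct.conjSubgroup_eq_of_le hPQ
  · have hRP : conjSubgroup g₃ (fullSubgroup Γ Gv (R : Set V)) ≤
        conjSubgroup g₁ (fullSubgroup Γ Gv (S : Set V)) := hR ▸ inf_le_left
    have hRS := Finset.coe_subset.1 (GraphProduct.subset_of_conjSubgroup_le_conjSubgroup hRP)
    obtain rfl := Finset.eq_of_subset_of_card_le hRS hcard
    rw [GraphProduct.conjSubgroup_eq_of_le hRP] at hR
    exact inf_eq_left.1 hR
end
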